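/- arXiv:2304.08363 — 2 statements merged into one kernel-verified Lean document; each statement's English description precedes it below -/
import Mathlib

section
/- The minimum distance of a concatenated quantum code formed from an outer [[n,k,d]] stabilizer code and an inner [[n',k',d']] stabilizer code is at least d·d'. -/
open Finset

/-- A Pauli operator on qubits indexed by `ι`, in binary symplectic
representation: the pair of its X-part and Z-part. -/
abbrev PauliRep (ι : Type) := (ι → ZMod 2) × (ι → ZMod 2)

/-- The binary symplectic inner product; it vanishes iff the Paulis commute. -/
def sympl {ι : Type} [Fintype ι] (p q : PauliRep ι) : ZMod 2 :=
  ∑ j, (p.1 j * q.2 j + q.1 j * p.2 j)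

/-- The weight of a Pauli operator: the number of qubits on which it acts
nontrivially. -/
def wt {ι : Type} [Fintype ι] [DecidableEq ι] (p : PauliRep ι) : ℕ :=
  (Finset.univ.filter (fun j => p.1 j ≠ 0 ∨ p.2 j ≠ 0)).card

/-- `p` commutes with every element of `S`, i.e. `p` lies in the normalizer. -/
def InNormalizer {ι : Type} [Fintype ι] (S : Submodule (ZMod 2) (PauliRep ι))
    (p : PauliRep ι) : Prop :=
  ∀ q ∈ S, sympl p q = 0

/-- The stabilizer group `S` is abelian (isotropic). -/
def Isotropic {ι : Type} [Fintype ι] (S : Submodule (ZMod 2) (PauliRep ι)) : Prop :=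
  ∀ p ∈ S, ∀ q ∈ S, sympl p q = 0

/-- The stabilizer code with stabilizer group `S` has minimum distance at least
`d`: every Pauli in `N(S) \ S` has weight at least `d`. -/
def DistanceGe {ι : Type} [Fintype ι] [DecidableEq ι]
    (S : Submodule (ZMod 2) (PauliRep ι)) (d : ℕ) : Prop :=
  ∀ p : PauliRep ι, InNormalizer S p → p ∉ S → d ≤ wt p

/-- Embed an outer-code Pauli (on the `n` outer qubits) into the `n × n'`
physical qubits, acting at inner position `j` of each block. -/
def embedOuter {n n' : ℕ} (j : Fin n') (p : PauliRep (Fin n)) :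
    PauliRep (Fin n × Fin n') :=
  (fun q => if q.2 = j then p.1 q.1 else 0, fun q => if q.2 = j then p.2 q.1 else 0)

/-- Push an inner-code Pauli `g` living on block `b` through the outer encoding:
`X` (resp. `Z`) on inner position `j` becomes the outer logical `X̄_b`
(resp. `Z̄_b`) placed at slot `j`. -/
def pushInner {n n' k : ℕ} (Xo Zo : Fin k → PauliRep (Fin n)) (b : Fin k)
    (g : PauliRep (Fin n')) : PauliRep (Fin n × Fin n') :=
  (fun q => g.1 q.2 * (Xo b).1 q.1 + g.2 q.2 * (Zo b).1 q.1,
   fun q => g.1 q.2 * (Xo b).2 q.1 + g.2 q.2 * (Zo b).2 q.1)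

/-- The stabilizer group of the concatenated code: generated by the outer
stabilizers in each of the `n'` transversal slots together with the inner
stabilizers of each of the `k` blocks pushed through the outer encoding. -/
def concatStab {n n' k : ℕ} (Sout : Submodule (ZMod 2) (PauliRep (Fin n)))
    (Sin : Submodule (ZMod 2) (PauliRep (Fin n')))
    (Xo Zo : Fin k → PauliRep (Fin n)) :
    Submodule (ZMod 2) (PauliRep (Fin n × Fin n')) :=
  Submodule.span (ZMod 2)
    ((⋃ j : Fin n', (embedOuter j) '' (Sout : Set (PauliRep (Fin n)))) ∪
      (⋃ b : Fin k, (pushInner Xo Zo b) '' (Sin : Set (PauliRep (Fin n')))))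

section ConcatAux

variable {ι : Type} [Fintype ι]

lemma sympl_comm (p q : PauliRep ι) : sympl p q = sympl q p :=
  Finset.sum_congr rfl fun j _ => by ring

lemma sympl_zero_right (p : PauliRep ι) : sympl p 0 = 0 := by
  simp [sympl]

lemma sympl_zero_left (p : PauliRep ι) : sympl 0 p = 0 := by
  rw [sympl_comm, sympl_zero_right]

lemma sympl_add_right (p q r : PauliRep ι) :
    sympl p (q + r) = sympl p q + sympl p r := by
  rw [sympl, sympl, sympl, ← Finset.sum_add_distrib]
  exact Finset.sum_congr rfl fun j _ => by
    simp only [Prod.fst_add, Prod.snd_add, Pi.add_apply]; ring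

lemma sympl_add_left (p q r : PauliRep ι) :
    sympl (p + q) r = sympl p r + sympl q r := by
  rw [sympl_comm, sympl_add_right, sympl_comm r p, sympl_comm r q]

lemma sympl_smul_right (c : ZMod 2) (p q : PauliRep ι) :
    sympl p (c • q) = c * sympl p q := by
  rw [sympl, sympl, Finset.mul_sum]
  exact Finset.sum_congr rfl fun j _ => by
    simp only [Prod.smul_fst, Prod.smul_snd, Pi.smul_apply, smul_eq_mul]; ring

lemma sympl_smul_left (c : ZMod 2) (p q : PauliRep ι) :
    sympl (c • p) q = c * sympl p q := by
  rw [sympl_comm, sympl_smul_right, sympl_comm]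

end ConcatAux

/-- The pslice of a concatenated-code Pauli at inner slot `j`. -/
def pslice {n n' : ℕ} (p : PauliRep (Fin n × Fin n')) (j : Fin n') :
    PauliRep (Fin n) :=
  (fun i => p.1 (i, j), fun i => p.2 (i, j))

/-- The per-block logical content of a concatenated-code Pauli, as an
inner-code Pauli. -/
def rIn {n n' k : ℕ} (Xo Zo : Fin k → PauliRep (Fin n))
    (p : PauliRep (Fin n × Fin n')) (b : Fin k) : PauliRep (Fin n') :=
  (fun j => sympl (pslice p j) (Zo b), fun j => sympl (pslice p j) (Xo b))

lemma sympl_embedOuter {n n' : ℕ} (p : PauliRep (Fin n × Fin n')) (j : Fin n')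
    (s : PauliRep (Fin n)) : sympl p (embedOuter j s) = sympl (pslice p j) s := by
  rw [sympl, Fintype.sum_prod_type_right, sympl]
  rw [Finset.sum_eq_single_of_mem j (Finset.mem_univ j)]
  · exact Finset.sum_congr rfl fun i _ => by simp [embedOuter, pslice]
  · intro j' _ hj'
    apply Finset.sum_eq_zero
    intro i _
    simp [embedOuter, hj']

lemma sympl_pushInner {n n' k : ℕ} (Xo Zo : Fin k → PauliRep (Fin n))
    (p : PauliRep (Fin n × Fin n')) (b : Fin k) (g : PauliRep (Fin n')) :
    sympl p (pushInner Xo Zo b g) = sympl (rIn Xo Zo p b) g := by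
  rw [sympl, Fintype.sum_prod_type_right, sympl]
  refine Finset.sum_congr rfl fun j _ => ?_
  simp only [pushInner, rIn, pslice, sympl, Finset.mul_sum, Finset.sum_mul,
    ← Finset.sum_add_distrib]
  refine Finset.sum_congr rfl fun i _ => ?_
  ring

lemma logical_decomp {n k : ℕ} (Xo Zo : Fin k → PauliRep (Fin n))
    (hXZ : ∀ a b, sympl (Xo a) (Zo b) = if a = b then 1 else 0)
    (hXX : ∀ a b, sympl (Xo a) (Xo b) = 0)
    (hZZ : ∀ a b, sympl (Zo a) (Zo b) = 0)
    {t : PauliRep (Fin n)}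
    (ht : t ∈ Submodule.span (ZMod 2) (Set.range Xo ∪ Set.range Zo)) :
    t = ∑ b, (sympl t (Zo b) • Xo b + sympl t (Xo b) • Zo b) := by
  induction ht using Submodule.span_induction with
  | mem x hx =>
    rcases hx with ⟨a, rfl⟩ | ⟨a, rfl⟩
    · simp only [hXZ, hXX, zero_smul, add_zero, ite_smul, one_smul]
      rw [Finset.sum_ite_eq]
      simp
    · have h1 : ∀ b, sympl (Zo a) (Xo b) = if b = a then 1 else 0 := fun b => by
        rw [sympl_comm, hXZ]
      simp only [hZZ, h1, zero_smul, zero_add, ite_smul, one_smul]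
      rw [Finset.sum_ite_eq']
      simp
  | zero => simp [sympl_zero_left]
  | add x y hx hy ihx ihy =>
    calc x + y = (∑ b, (sympl x (Zo b) • Xo b + sympl x (Xo b) • Zo b)) +
        ∑ b, (sympl y (Zo b) • Xo b + sympl y (Xo b) • Zo b) := by
          rw [← ihx, ← ihy]
      _ = _ := by
          rw [← Finset.sum_add_distrib]
          refine Finset.sum_congr rfl fun b _ => ?_
          rw [sympl_add_left, sympl_add_left, add_smul, add_smul]
          abel
  | smul c x hx ih =>
    conv_lhs => rw [ih]
    rw [Finset.smul_sum]
    refine Finset.sum_congr rfl fun b _ => ?_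
    rw [smul_add, smul_smul, smul_smul, sympl_smul_left, sympl_smul_left]


/-- The minimum distance of the concatenation of an outer `[[n,k,d]]` stabilizer
code with an inner `[[n',k',d']]` stabilizer code is at least `d·d'`. -/
theorem concatenated_code_distance {n n' k : ℕ} {d d' : ℕ}
    (Sout : Submodule (ZMod 2) (PauliRep (Fin n)))
    (Sin : Submodule (ZMod 2) (PauliRep (Fin n')))
    (Xo Zo : Fin k → PauliRep (Fin n))
    (hIsoOut : Isotropic Sout) (hIsoIn : Isotropic Sin)
    (hdOut : DistanceGe Sout d) (hdIn : DistanceGe Sin d')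
    (hXnorm : ∀ b, InNormalizer Sout (Xo b))
    (hZnorm : ∀ b, InNormalizer Sout (Zo b))
    (hXnotin : ∀ b, Xo b ∉ Sout) (hZnotin : ∀ b, Zo b ∉ Sout)
    (hXZ : ∀ a b, sympl (Xo a) (Zo b) = if a = b then 1 else 0)
    (hXX : ∀ a b, sympl (Xo a) (Xo b) = 0)
    (hZZ : ∀ a b, sympl (Zo a) (Zo b) = 0)
    (hcomplete : ∀ p, InNormalizer Sout p →
      p ∈ Sout ⊔ Submodule.span (ZMod 2) (Set.range Xo ∪ Set.range Zo)) :
    DistanceGe (concatStab Sout Sin Xo Zo) (d * d') := by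
  intro p hpN hpS
  classical
  -- membership of generators
  have hEmem : ∀ (j : Fin n') (s : PauliRep (Fin n)), s ∈ Sout →
      embedOuter j s ∈ concatStab Sout Sin Xo Zo := fun j s hs =>
    Submodule.subset_span (Or.inl (Set.mem_iUnion.mpr ⟨j, ⟨s, hs, rfl⟩⟩))
  have hPmem : ∀ (b : Fin k) (g : PauliRep (Fin n')), g ∈ Sin →
      pushInner Xo Zo b g ∈ concatStab Sout Sin Xo Zo := fun b g hg =>
    Submodule.subset_span (Or.inr (Set.mem_iUnion.mpr ⟨b, ⟨g, hg, rfl⟩⟩))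
  -- every slice is in the normalizer of the outer code
  have hsliceN : ∀ j, InNormalizer Sout (pslice p j) := by
    intro j s hs
    rw [← sympl_embedOuter]
    exact hpN _ (hEmem j s hs)
  -- decompose each slice via completeness
  choose s hsS t htspan hst using
    fun j => Submodule.mem_sup.mp (hcomplete (pslice p j) (hsliceN j))
  have haz : ∀ b j, sympl (t j) (Zo b) = (rIn Xo Zo p b).1 j := by
    intro b j
    have h0 : sympl (s j) (Zo b) + sympl (t j) (Zo b) = sympl (pslice p j) (Zo b) := by
      rw [← sympl_add_left, hst j]
    have hs0 : sympl (s j) (Zo b) = 0 := by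
      rw [sympl_comm]; exact hZnorm b _ (hsS j)
    rw [hs0, zero_add] at h0
    exact h0
  have hax : ∀ b j, sympl (t j) (Xo b) = (rIn Xo Zo p b).2 j := by
    intro b j
    have h0 : sympl (s j) (Xo b) + sympl (t j) (Xo b) = sympl (pslice p j) (Xo b) := by
      rw [← sympl_add_left, hst j]
    have hs0 : sympl (s j) (Xo b) = 0 := by
      rw [sympl_comm]; exact hXnorm b _ (hsS j)
    rw [hs0, zero_add] at h0
    exact h0
  have htdec : ∀ j, t j = ∑ b, ((rIn Xo Zo p b).1 j • Xo b + (rIn Xo Zo p b).2 j • Zo b) := by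
    intro j
    have := logical_decomp Xo Zo hXZ hXX hZZ (htspan j)
    simpa only [haz, hax] using this
  -- key decomposition of p
  have hkey : p = (∑ j, embedOuter j (s j)) + ∑ b, pushInner Xo Zo b (rIn Xo Zo p b) := by
    refine Prod.ext ?_ ?_ <;> funext q <;> obtain ⟨i, j⟩ := q
    · have h1 : p.1 (i, j) = (s j).1 i + (t j).1 i := by
        have := congrArg (fun w => w.1 i) (hst j)
        simpa [pslice, Prod.fst_add, Pi.add_apply] using this.symm
      have h2 : (t j).1 i
          = ∑ b, ((rIn Xo Zo p b).1 j * (Xo b).1 i + (rIn Xo Zo p b).2 j * (Zo b).1 i) := by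
        conv_lhs => rw [htdec j]
        rw [Prod.fst_sum, Finset.sum_apply]
        exact Finset.sum_congr rfl fun b _ => by
          simp [Prod.fst_add, Pi.add_apply, Prod.smul_fst, Pi.smul_apply, smul_eq_mul]
      have h3 : (∑ j', embedOuter j' (s j')).1 (i, j) = (s j).1 i := by
        rw [Prod.fst_sum, Finset.sum_apply]
        simp only [embedOuter]
        rw [Finset.sum_ite_eq]
        simp
      have h4 : (∑ b, pushInner Xo Zo b (rIn Xo Zo p b)).1 (i, j)
          = ∑ b, ((rIn Xo Zo p b).1 j * (Xo b).1 i + (rIn Xo Zo p b).2 j * (Zo b).1 i) := by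
        rw [Prod.fst_sum, Finset.sum_apply]
        exact Finset.sum_congr rfl fun b _ => rfl
      show p.1 (i, j) = ((∑ j', embedOuter j' (s j')) + ∑ b, pushInner Xo Zo b (rIn Xo Zo p b)).1 (i, j)
      rw [Prod.fst_add, Pi.add_apply, h3, h4, h1, h2]
    · have h1 : p.2 (i, j) = (s j).2 i + (t j).2 i := by
        have := congrArg (fun w => w.2 i) (hst j)
        simpa [pslice, Prod.snd_add, Pi.add_apply] using this.symm
      have h2 : (t j).2 i
          = ∑ b, ((rIn Xo Zo p b).1 j * (Xo b).2 i + (rIn Xo Zo p b).2 j * (Zo b).2 i) := by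
        conv_lhs => rw [htdec j]
        rw [Prod.snd_sum, Finset.sum_apply]
        exact Finset.sum_congr rfl fun b _ => by
          simp [Prod.snd_add, Pi.add_apply, Prod.smul_snd, Pi.smul_apply, smul_eq_mul]
      have h3 : (∑ j', embedOuter j' (s j')).2 (i, j) = (s j).2 i := by
        rw [Prod.snd_sum, Finset.sum_apply]
        simp only [embedOuter]
        rw [Finset.sum_ite_eq]
        simp
      have h4 : (∑ b, pushInner Xo Zo b (rIn Xo Zo p b)).2 (i, j)
          = ∑ b, ((rIn Xo Zo p b).1 j * (Xo b).2 i + (rIn Xo Zo p b).2 j * (Zo b).2 i) := by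
        rw [Prod.snd_sum, Finset.sum_apply]
        exact Finset.sum_congr rfl fun b _ => rfl
      show p.2 (i, j) = ((∑ j', embedOuter j' (s j')) + ∑ b, pushInner Xo Zo b (rIn Xo Zo p b)).2 (i, j)
      rw [Prod.snd_add, Pi.add_apply, h3, h4, h1, h2]
  -- some block carries nontrivial logical content
  have hb : ∃ b, rIn Xo Zo p b ∉ Sin := by
    by_contra h
    push_neg at h
    apply hpS
    rw [hkey]
    exact Submodule.add_mem _
      (Submodule.sum_mem _ fun j _ => hEmem j (s j) (hsS j))
      (Submodule.sum_mem _ fun b _ => hPmem b _ (h b))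
  obtain ⟨b₀, hb₀⟩ := hb
  have hrN : InNormalizer Sin (rIn Xo Zo p b₀) := fun g hg => by
    rw [← sympl_pushInner]
    exact hpN _ (hPmem b₀ g hg)
  have hd'le : d' ≤ wt (rIn Xo Zo p b₀) := hdIn _ hrN hb₀
  -- slices supporting the logical content are heavy
  have hsl : ∀ j, ((rIn Xo Zo p b₀).1 j ≠ 0 ∨ (rIn Xo Zo p b₀).2 j ≠ 0) →
      d ≤ wt (pslice p j) := by
    intro j hj
    refine hdOut _ (hsliceN j) fun hmem => ?_
    have hz : (rIn Xo Zo p b₀).1 j = 0 := by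
      show sympl (pslice p j) (Zo b₀) = 0
      rw [sympl_comm]; exact hZnorm b₀ _ hmem
    have hx : (rIn Xo Zo p b₀).2 j = 0 := by
      show sympl (pslice p j) (Xo b₀) = 0
      rw [sympl_comm]; exact hXnorm b₀ _ hmem
    rcases hj with h | h
    · exact h hz
    · exact h hx
  -- weight decomposes over slots
  have hwt : wt p = ∑ j, wt (pslice p j) := by
    simp only [wt, Finset.card_filter]
    rw [Fintype.sum_prod_type_right]
    rfl
  calc d * d' ≤ d * wt (rIn Xo Zo p b₀) := Nat.mul_le_mul_left d hd'le
    _ = ∑ j ∈ Finset.univ.filter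
          (fun j => (rIn Xo Zo p b₀).1 j ≠ 0 ∨ (rIn Xo Zo p b₀).2 j ≠ 0), d := by
        rw [wt, Finset.sum_const, smul_eq_mul, mul_comm]
    _ ≤ ∑ j ∈ Finset.univ.filter
          (fun j => (rIn Xo Zo p b₀).1 j ≠ 0 ∨ (rIn Xo Zo p b₀).2 j ≠ 0),
          wt (pslice p j) :=
        Finset.sum_le_sum fun j hj => hsl j (Finset.mem_filter.mp hj).2
    _ ≤ ∑ j, wt (pslice p j) :=
        Finset.sum_le_sum_of_subset (Finset.filter_subset _ _)
    _ = wt p := hwt.symm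
end

section
/- For the encoder E_G of a standard-form [[n,k,d]] graph code with classical codeword matrix Γ and graph G, the Choi state |E_G⟩ on k+n qubits is (up to Hadamards on the first k qubits) the graph state of the graph on k+n vertices with adjacency matrix [[0, Γ],[Γ^T, G]]; equivalently |E_G⟩ has stabilizer check matrix [[I_k, 0 | 0, Γ],[0, I_n | Γ^T, G]]. -/
open Finset

/-- Graph state (amplitudes) associated to an adjacency matrix `A` on vertices
`q`, with a vertex ordering `ord` used to enumerate each edge once:
amplitude `(-1)^{#{edges with both endpoints set to 1}}`. -/
def genGraphState {q : Type} [Fintype q] [DecidableEq q] (ord : q → ℕ)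
    (A : q → q → ZMod 2) (s : q → ZMod 2) : ℂ :=
  (-1 : ℂ) ^ ((Finset.univ.filter (fun p : q × q =>
      ord p.1 < ord p.2 ∧ A p.1 p.2 = 1 ∧ s p.1 = 1 ∧ s p.2 = 1)).card)

/-- The Pauli operator `X^x Z^z` acting on a state of qubits indexed by `q`. -/
def pauliAct {q : Type} [Fintype q] (x z : q → ZMod 2)
    (ψ : (q → ZMod 2) → ℂ) : (q → ZMod 2) → ℂ :=
  fun s => (-1 : ℂ) ^ ((∑ j, z j * (s j + x j)).val) * ψ (s + x)

variable {k n : ℕ}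

/-- The block adjacency matrix `[[0, Γ],[Γᵀ, G]]` on the `k + n` vertices
`Fin k ⊕ Fin n`. -/
def bigAdj (Γ : Matrix (Fin k) (Fin n) (ZMod 2)) (G : SimpleGraph (Fin n))
    [DecidableRel G.Adj] : (Fin k ⊕ Fin n) → (Fin k ⊕ Fin n) → ZMod 2 :=
  fun u w =>
    Sum.elim (fun a => Sum.elim (fun _ : Fin k => (0 : ZMod 2)) (fun j => Γ a j) w)
      (fun j => Sum.elim (fun a => Γ a j) (fun j' => G.adjMatrix (ZMod 2) j j') w) u

/-- The Choi state `|E_G⟩ = Σ_i |i⟩ ⊗ Z^{iΓ}|G⟩` of the standard-form graph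
code encoder, as amplitudes on `k + n` qubits indexed by `Fin k ⊕ Fin n`. -/
def choiState (Γ : Matrix (Fin k) (Fin n) (ZMod 2)) (G : SimpleGraph (Fin n))
    [DecidableRel G.Adj] : ((Fin k ⊕ Fin n) → ZMod 2) → ℂ :=
  fun s => (-1 : ℂ) ^ ((∑ a, ∑ j, s (Sum.inl a) * Γ a j * s (Sum.inr j)).val) *
    genGraphState (fun j : Fin n => (j : ℕ)) (G.adjMatrix (ZMod 2))
      (fun j => s (Sum.inr j))

/-! Over `𝔽₂` the amplitude of a graph state is `(-1)^Q(s)` for the quadratic form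
`Q(s) = ∑_{i<j} A i j * s i * s j`. The phase `∑ s_a Γ_aj s_j` of the Choi state together with
the phase `Q_G` of `|G⟩` is exactly `Q` for the block matrix `[[0, Γ], [Γᵀ, G]]`, so `|E_G⟩` *is*
that graph state. For a symmetric `A` with `A u u = 0`, flipping the bit `s u` changes `Q` by
`∑_w A u w * s w`, which is the phase picked up by `Z^{A u}`; hence `X_u Z^{A u}` stabilises every
graph state, and the rows of the check matrix are these stabilisers for the block matrix. -/

def signChar : AddChar (ZMod 2) ℂ := AddChar.zmodChar 2 (by norm_num : (-1 : ℂ) ^ 2 = 1)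

lemma signChar_apply (x : ZMod 2) : signChar x = (-1) ^ x.val := AddChar.zmodChar_apply _ x

lemma signChar_natCast (m : ℕ) : signChar m = (-1) ^ m := AddChar.zmodChar_apply' _ m

lemma signChar_mul_self (x : ZMod 2) : signChar x * signChar x = 1 := by
  rw [← AddChar.map_add_eq_mul, CharTwo.add_self_eq_zero, AddChar.map_zero_eq_one]

lemma sum_ite_lt_add_swap {q R : Type*} [Fintype q] [AddCommMonoid R] {ord : q → ℕ}
    (hord : Function.Injective ord) (f : q × q → R) (hdiag : ∀ a, f (a, a) = 0) :
    ∑ p : q × q, (if ord p.1 < ord p.2 then f p + f p.swap else 0) = ∑ p, f p := by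
  have hsplit : ∀ p : q × q,
      f p = (if ord p.1 < ord p.2 then f p else 0) + (if ord p.2 < ord p.1 then f p else 0) := by
    rintro ⟨a, b⟩
    rcases lt_trichotomy (ord a) (ord b) with h | h | h
    · simp [h, h.not_gt]
    · simp [hord h, hdiag]
    · simp [h, h.not_gt]
  have hswap : ∑ p : q × q, (if ord p.2 < ord p.1 then f p else 0)
      = ∑ p : q × q, (if ord p.1 < ord p.2 then f p.swap else 0) :=
    (Fintype.sum_equiv (Equiv.prodComm q q) _ _ fun _ => rfl)
  rw [Fintype.sum_congr _ _ hsplit, Finset.sum_add_distrib, hswap, ← Finset.sum_add_distrib]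
  exact Fintype.sum_congr _ _ fun p => by split_ifs <;> simp

section GraphState

variable {q : Type} [Fintype q] [DecidableEq q]

def graphPhase (ord : q → ℕ) (A : q → q → ZMod 2) (s : q → ZMod 2) : ZMod 2 :=
  ∑ p : q × q, if ord p.1 < ord p.2 then A p.1 p.2 * s p.1 * s p.2 else 0

lemma genGraphState_eq_signChar (ord : q → ℕ) (A : q → q → ZMod 2) (s : q → ZMod 2) :
    genGraphState ord A s = signChar (graphPhase ord A s) := by
  have hprod : ∀ a b c : ZMod 2, a * b * c = if a = 1 ∧ b = 1 ∧ c = 1 then 1 else 0 := by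
    decide
  rw [genGraphState, ← signChar_natCast, Finset.natCast_card_filter, graphPhase]
  simp only [hprod, ← ite_and]

lemma graphPhase_add_indicator {ord : q → ℕ} (hord : Function.Injective ord)
    {A : q → q → ZMod 2} (hA : ∀ a b, A a b = A b a) {u : q} (hu : A u u = 0)
    (s : q → ZMod 2) :
    graphPhase ord A (s + fun w => if w = u then 1 else 0)
      = graphPhase ord A s + ∑ w, A u w * s w := by
  set e : q → ZMod 2 := fun w => if w = u then 1 else 0
  set f : q × q → ZMod 2 := fun p => A p.1 p.2 * s p.1 * e p.2
  -- by symmetry of `A` the two cross terms of `(s + e) a * (s + e) b` are `f (a, b)` and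
  -- `f (b, a)`, while `e a * e b` vanishes off the diagonal
  have hexpand : ∀ p : q × q,
      (if ord p.1 < ord p.2 then A p.1 p.2 * (s + e) p.1 * (s + e) p.2 else 0)
      = (if ord p.1 < ord p.2 then A p.1 p.2 * s p.1 * s p.2 else 0)
        + (if ord p.1 < ord p.2 then f p + f p.swap else 0) := by
    rintro ⟨a, b⟩
    by_cases hab : ord a < ord b
    · simp only [hab, if_true, Pi.add_apply, f, e, Prod.swap, hA b a]
      split_ifs <;> simp_all <;> ring
    · simp [hab]
  have hdiag : ∀ a, f (a, a) = 0 := fun a => by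
    by_cases ha : a = u <;> simp [f, e, ha, hu]
  have hf : ∑ p, f p = ∑ w, A u w * s w := by
    simp [f, e, Fintype.sum_prod_type, hA _ u]
  rw [graphPhase, Fintype.sum_congr _ _ hexpand, Finset.sum_add_distrib,
    sum_ite_lt_add_swap hord f hdiag, hf, graphPhase]

lemma pauliAct_genGraphState {ord : q → ℕ} (hord : Function.Injective ord)
    {A : q → q → ZMod 2} (hA : ∀ a b, A a b = A b a) {u : q} (hu : A u u = 0) :
    pauliAct (fun w => if w = u then 1 else 0) (A u) (genGraphState ord A)
      = genGraphState ord A := by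
  funext s
  have hphase : ∑ w, A u w * (s w + if w = u then 1 else 0) = ∑ w, A u w * s w := by
    simp [mul_add, Finset.sum_add_distrib, hu]
  rw [pauliAct, ← signChar_apply, hphase, genGraphState_eq_signChar, genGraphState_eq_signChar,
    graphPhase_add_indicator hord hA hu, AddChar.map_add_eq_mul, ← mul_assoc, mul_comm,
    ← mul_assoc, signChar_mul_self, one_mul]

end GraphState

lemma bigAdj_symm (Γ : Matrix (Fin k) (Fin n) (ZMod 2)) (G : SimpleGraph (Fin n))
    [DecidableRel G.Adj] (u w : Fin k ⊕ Fin n) : bigAdj Γ G u w = bigAdj Γ G w u := by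
  rcases u with a | j <;> rcases w with b | j' <;>
    simp [bigAdj, SimpleGraph.adjMatrix_apply, G.adj_comm]

lemma bigAdj_self (Γ : Matrix (Fin k) (Fin n) (ZMod 2)) (G : SimpleGraph (Fin n))
    [DecidableRel G.Adj] (u : Fin k ⊕ Fin n) : bigAdj Γ G u u = 0 := by
  rcases u with a | j <;> simp [bigAdj]

lemma injective_val_finSumFinEquiv :
    Function.Injective (fun u : Fin k ⊕ Fin n => (finSumFinEquiv u : ℕ)) :=
  Fin.val_injective.comp finSumFinEquiv.injective

lemma graphPhase_bigAdj (Γ : Matrix (Fin k) (Fin n) (ZMod 2)) (G : SimpleGraph (Fin n))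
    [DecidableRel G.Adj] (s : Fin k ⊕ Fin n → ZMod 2) :
    graphPhase (fun u => (finSumFinEquiv u : ℕ)) (bigAdj Γ G) s
      = ∑ a, ∑ j, s (Sum.inl a) * Γ a j * s (Sum.inr j)
        + graphPhase (fun j : Fin n => (j : ℕ)) (G.adjMatrix (ZMod 2)) (fun j => s (Sum.inr j)) := by
  have hlt : ∀ (a : Fin k) (j : Fin n), (a : ℕ) < k + j := fun a j => by omega
  have hgt : ∀ (a : Fin k) (j : Fin n), ¬ k + (j : ℕ) < a := fun a j => by omega
  simp only [graphPhase, Fintype.sum_prod_type, Fintype.sum_sum_type, finSumFinEquiv_apply_left,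
    finSumFinEquiv_apply_right, Fin.val_castAdd, Fin.val_natAdd, bigAdj, Sum.elim_inl,
    Sum.elim_inr, hlt, hgt, add_lt_add_iff_left, if_true, if_false, zero_mul, ite_self,
    Finset.sum_const_zero, zero_add]
  congr 1
  exact Fintype.sum_congr _ _ fun a => Fintype.sum_congr _ _ fun j => by ring

lemma choiState_eq_genGraphState (Γ : Matrix (Fin k) (Fin n) (ZMod 2))
    (G : SimpleGraph (Fin n)) [DecidableRel G.Adj] :
    choiState Γ G = genGraphState (fun u => (finSumFinEquiv u : ℕ)) (bigAdj Γ G) := by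
  funext s
  rw [genGraphState_eq_signChar, graphPhase_bigAdj, AddChar.map_add_eq_mul]
  exact congrArg₂ (· * ·) (signChar_apply _).symm (genGraphState_eq_signChar _ _ _)

/-- The Choi state of the encoder `E_G` of a standard-form `[[n,k,d]]` graph
code is (up to a nonzero scalar) the graph state of the graph on `k + n`
vertices with adjacency matrix `[[0, Γ],[Γᵀ, G]]`; equivalently `|E_G⟩` is
stabilized by the Paulis with check matrix `[[I_k, 0 | 0, Γ],[0, I_n | Γᵀ, G]]`. -/
theorem choiState_graph_code (Γ : Matrix (Fin k) (Fin n) (ZMod 2))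
    (G : SimpleGraph (Fin n)) [DecidableRel G.Adj] :
    (∃ c : ℂ, c ≠ 0 ∧ choiState Γ G =
      c • genGraphState (fun u => (finSumFinEquiv u : ℕ)) (bigAdj Γ G)) ∧
    (∀ a : Fin k, pauliAct
        (fun u => if u = Sum.inl a then 1 else 0)
        (fun u => Sum.elim (fun _ : Fin k => (0 : ZMod 2)) (fun j => Γ a j) u)
        (choiState Γ G) = choiState Γ G) ∧
    (∀ v : Fin n, pauliAct
        (fun u => if u = Sum.inr v then 1 else 0)
        (fun u => Sum.elim (fun a => Γ a v) (fun j => G.adjMatrix (ZMod 2) v j) u)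
        (choiState Γ G) = choiState Γ G) := by
  have hstab : ∀ u, pauliAct (fun w => if w = u then 1 else 0) (bigAdj Γ G u) (choiState Γ G)
      = choiState Γ G := fun u => by
    rw [choiState_eq_genGraphState]
    exact pauliAct_genGraphState injective_val_finSumFinEquiv (bigAdj_symm Γ G) (bigAdj_self Γ G u)
  exact ⟨⟨1, one_ne_zero, by rw [one_smul, choiState_eq_genGraphState]⟩,
    fun a => hstab (Sum.inl a), fun v => hstab (Sum.inr v)⟩
end
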